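/- Let db be a double bracket on A, set {a,b} := μ(db(a ⊗ b)), and define D₁ := R₁₂ ∘ R₂₃ − R₂₃ ∘ R₁₃ − R₁₃ ∘ R₁₂ and D₂ := σ₁₂ ∘ (R₁₃ ∘ R₂₃ − R₂₁ ∘ R₁₃ − R₂₃ ∘ R₁₂), where σ₁₂ : A⊗A⊗A → A⊗A⊗A swaps the first two tensor factors. Then for all H₁, H₂, x ∈ A: {H₁, {H₂, x}} − {H₂, {H₁, x}} − {{H₁, H₂}, x} = μ₃((D₁ + D₂)(H₁ ⊗ H₂ ⊗ x)), where μ₃ : A⊗A⊗A → A is the triple multiplication map a⊗b⊗c ↦ abc. In particular, the Jacobi identity {H₁,{H₂,x}} − {H₂,{H₁,x}} = {{H₁,H₂},x} holds for all H₁,H₂,x if and only if μ₃ ∘ (D₁ + D₂) = 0. -/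

import Mathlib

open TensorProduct LinearMap

/-!
Write `{a, b} = μ(db(a ⊗ b))`. The right Leibniz rule makes `{h, -}` a derivation of `A`, so
expanding `{h₁, {h₂, x}}` along the Sweedler components of `db(h₂ ⊗ x)` produces
`μ₃ (R₁₂ + σ₁₂ R₁₃) R₂₃`; in the same way `{h₂, {h₁, x}}` is `μ₃ (R₂₃ + σ₁₂ R₂₁) R₁₃`, and the
left Leibniz rule turns `{{h₁, h₂}, x}` into `μ₃ (R₁₃ + σ₁₂ R₂₃) R₁₂`. These six terms are those
of `D₁ + D₂`, grouped by the operator applied first. As both sides are trilinear, the Jacobi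
identity holds iff `μ₃ ∘ (D₁ + D₂)` vanishes on pure tensors.
-/

section Multiplication

variable {R A : Type*} [CommSemiring R] [Semiring A] [Algebra R A]

theorem LinearMap.mul'_tmul_one_mul (c : A) (w : A ⊗[R] A) :
    mul' R A ((c ⊗ₜ 1) * w) = c * mul' R A w := by
  induction w using TensorProduct.induction_on with
  | zero => simp
  | tmul a b => simp [mul_assoc]
  | add u v hu hv => simp only [mul_add, map_add, hu, hv]

theorem LinearMap.mul'_mul_one_tmul (w : A ⊗[R] A) (c : A) :
    mul' R A (w * (1 ⊗ₜ c)) = mul' R A w * c := by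
  induction w using TensorProduct.induction_on with
  | zero => simp
  | tmul a b => simp [mul_assoc]
  | add u v hu hv => simp only [add_mul, map_add, hu, hv]

theorem LinearMap.mul'_one_tmul_mul (c : A) (w : A ⊗[R] A) :
    mul' R A ((1 ⊗ₜ c) * w) = mul' R A (w * (c ⊗ₜ 1)) := by
  induction w using TensorProduct.induction_on with
  | zero => simp
  | tmul a b => simp [mul_assoc]
  | add u v hu hv => simp only [mul_add, add_mul, map_add, hu, hv]

variable (R A) in
def mul₃ : (A ⊗[R] A) ⊗[R] A →ₗ[R] A := mul' R A ∘ₗ rTensor A (mul' R A)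

variable (R A) in
def swap₁₂ : (A ⊗[R] A) ⊗[R] A →ₗ[R] (A ⊗[R] A) ⊗[R] A :=
  rTensor A (TensorProduct.comm R A A).toLinearMap

@[simp]
theorem mul₃_tmul (w : A ⊗[R] A) (c : A) : mul₃ R A (w ⊗ₜ c) = mul' R A w * c := rfl

theorem mul₃_assoc_symm_tmul (c : A) (w : A ⊗[R] A) :
    mul₃ R A ((TensorProduct.assoc R A A A).symm (c ⊗ₜ w)) = c * mul' R A w := by
  induction w using TensorProduct.induction_on with
  | zero => simp
  | tmul a b => simp [mul_assoc]
  | add u v hu hv => simp only [tmul_add, map_add, mul_add, hu, hv]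

theorem mul₃_rightComm_tmul (w : A ⊗[R] A) (c : A) :
    mul₃ R A (TensorProduct.rightComm R A A A (w ⊗ₜ c)) = mul' R A (w * (c ⊗ₜ 1)) := by
  induction w using TensorProduct.induction_on with
  | zero => simp
  | tmul a b => simp
  | add u v hu hv => simp only [add_tmul, map_add, add_mul, hu, hv]

@[simp]
theorem swap₁₂_swap₁₂ (t : (A ⊗[R] A) ⊗[R] A) : swap₁₂ R A (swap₁₂ R A t) = t := by
  rw [swap₁₂, ← comp_apply, ← rTensor_comp]
  simp

theorem swap₁₂_rightComm_tmul (w : A ⊗[R] A) (c : A) :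
    swap₁₂ R A (TensorProduct.rightComm R A A A (w ⊗ₜ c)) =
      (TensorProduct.assoc R A A A).symm (c ⊗ₜ w) := by
  induction w using TensorProduct.induction_on with
  | zero => simp
  | tmul a b => rfl
  | add u v hu hv => simp only [add_tmul, tmul_add, map_add, hu, hv]

end Multiplication

namespace DoubleBracket

section Semiring

variable {R A : Type*} [CommSemiring R] [Semiring A] [Algebra R A]
  (db : A ⊗[R] A →ₗ[R] A ⊗[R] A)

def LeibnizRight : Prop :=
  ∀ a b c : A, db (a ⊗ₜ (b * c)) = (b ⊗ₜ 1) * db (a ⊗ₜ c) + db (a ⊗ₜ b) * (1 ⊗ₜ c)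

def LeibnizLeft : Prop :=
  ∀ a b c : A, db ((a * b) ⊗ₜ c) = (1 ⊗ₜ a) * db (b ⊗ₜ c) + db (a ⊗ₜ c) * (b ⊗ₜ 1)

def bracket : A →ₗ[R] A →ₗ[R] A := (TensorProduct.mk R A A).compr₂ (mul' R A ∘ₗ db)

theorem bracket_apply (a b : A) : bracket db a b = mul' R A (db (a ⊗ₜ b)) := rfl

def R₁₂ : (A ⊗[R] A) ⊗[R] A →ₗ[R] (A ⊗[R] A) ⊗[R] A := rTensor A db

def R₂₃ : (A ⊗[R] A) ⊗[R] A →ₗ[R] (A ⊗[R] A) ⊗[R] A :=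
  (TensorProduct.assoc R A A A).symm.toLinearMap ∘ₗ lTensor A db ∘ₗ
    (TensorProduct.assoc R A A A).toLinearMap

def R₁₃ : (A ⊗[R] A) ⊗[R] A →ₗ[R] (A ⊗[R] A) ⊗[R] A :=
  (TensorProduct.rightComm R A A A).toLinearMap ∘ₗ rTensor A db ∘ₗ
    (TensorProduct.rightComm R A A A).toLinearMap

def R₂₁ : (A ⊗[R] A) ⊗[R] A →ₗ[R] (A ⊗[R] A) ⊗[R] A := swap₁₂ R A ∘ₗ R₁₂ db ∘ₗ swap₁₂ R A

variable {db}

theorem bracket_mul_right (hR : LeibnizRight db) (h a b : A) :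
    bracket db h (a * b) = a * bracket db h b + bracket db h a * b := by
  simp only [bracket_apply, hR h a b, map_add, mul'_tmul_one_mul, mul'_mul_one_tmul]

theorem bracket_mul_left (hL : LeibnizLeft db) (a b c : A) :
    bracket db (a * b) c =
      mul' R A (db (b ⊗ₜ c) * (a ⊗ₜ 1)) + mul' R A (db (a ⊗ₜ c) * (b ⊗ₜ 1)) := by
  rw [bracket_apply, hL a b c, map_add, mul'_one_tmul_mul]

theorem bracket_bracket_eq_mul₃_R₂₃ (hR : LeibnizRight db) (h₁ h₂ x : A) :
    bracket db h₁ (bracket db h₂ x) =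
      mul₃ R A ((R₁₂ db + swap₁₂ R A ∘ₗ R₁₃ db) (R₂₃ db ((h₁ ⊗ₜ h₂) ⊗ₜ x))) := by
  suffices ∀ u : A ⊗[R] A, bracket db h₁ (mul' R A u) = mul₃ R A
      ((R₁₂ db + swap₁₂ R A ∘ₗ R₁₃ db) ((TensorProduct.assoc R A A A).symm (h₁ ⊗ₜ u))) from
    this (db (h₂ ⊗ₜ x))
  intro u
  induction u using TensorProduct.induction_on with
  | zero => simp
  | tmul a b =>
    simp [bracket_mul_right hR, R₁₂, R₁₃, swap₁₂_rightComm_tmul, mul₃_assoc_symm_tmul,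
      bracket_apply, add_comm]
  | add u v hu hv => simp only [map_add, tmul_add, hu, hv]

theorem bracket_bracket_eq_mul₃_R₁₃ (hR : LeibnizRight db) (h₁ h₂ x : A) :
    bracket db h₂ (bracket db h₁ x) =
      mul₃ R A ((R₂₃ db + swap₁₂ R A ∘ₗ R₂₁ db) (R₁₃ db ((h₁ ⊗ₜ h₂) ⊗ₜ x))) := by
  suffices ∀ u : A ⊗[R] A, bracket db h₂ (mul' R A u) = mul₃ R A
      ((R₂₃ db + swap₁₂ R A ∘ₗ R₂₁ db) (TensorProduct.rightComm R A A A (u ⊗ₜ h₂))) from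
    this (db (h₁ ⊗ₜ x))
  intro u
  induction u using TensorProduct.induction_on with
  | zero => simp
  | tmul a b =>
    simp [bracket_mul_right hR, R₂₃, R₂₁, R₁₂, swap₁₂, mul₃_assoc_symm_tmul, bracket_apply]
  | add u v hu hv => simp only [map_add, add_tmul, hu, hv]

theorem bracket_bracket_left_eq_mul₃_R₁₂ (hL : LeibnizLeft db) (h₁ h₂ x : A) :
    bracket db (bracket db h₁ h₂) x =
      mul₃ R A ((R₁₃ db + swap₁₂ R A ∘ₗ R₂₃ db) (R₁₂ db ((h₁ ⊗ₜ h₂) ⊗ₜ x))) := by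
  suffices ∀ u : A ⊗[R] A, bracket db (mul' R A u) x = mul₃ R A
      ((R₁₃ db + swap₁₂ R A ∘ₗ R₂₃ db) (u ⊗ₜ x)) from this (db (h₁ ⊗ₜ h₂))
  intro u
  induction u using TensorProduct.induction_on with
  | zero => simp
  | tmul a b =>
    rw [mul'_apply, bracket_mul_left hL, add_comm]
    simp [R₁₃, R₂₃, ← swap₁₂_rightComm_tmul, mul₃_rightComm_tmul]
  | add u v hu hv => simp only [map_add, add_tmul, LinearMap.add_apply, hu, hv]

theorem eq_R₂₃_of_tmul {J R' : (A ⊗[R] A) ⊗[R] A →ₗ[R] (A ⊗[R] A) ⊗[R] A}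
    (hJ : ∀ x y a : A, J ((x ⊗ₜ y) ⊗ₜ a) = (a ⊗ₜ x) ⊗ₜ y)
    (hR : ∀ a b c : A, R' ((a ⊗ₜ b) ⊗ₜ c) = J (db (b ⊗ₜ c) ⊗ₜ a)) : R' = R₂₃ db := by
  obtain rfl : J = (TensorProduct.assoc R A A A).symm.toLinearMap ∘ₗ
      (TensorProduct.comm R (A ⊗[R] A) A).toLinearMap :=
    ext_threefold fun x y a => by simp [hJ]
  exact ext_threefold fun a b c => by simp [hR, R₂₃]

theorem eq_R₁₃_of_tmul {J R' : (A ⊗[R] A) ⊗[R] A →ₗ[R] (A ⊗[R] A) ⊗[R] A}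
    (hJ : ∀ x y b : A, J ((x ⊗ₜ y) ⊗ₜ b) = (x ⊗ₜ b) ⊗ₜ y)
    (hR : ∀ a b c : A, R' ((a ⊗ₜ b) ⊗ₜ c) = J (db (a ⊗ₜ c) ⊗ₜ b)) : R' = R₁₃ db := by
  obtain rfl : J = (TensorProduct.rightComm R A A A).toLinearMap :=
    ext_threefold fun x y b => by simp [hJ]
  exact ext_threefold fun a b c => by simp [hR, R₁₃]

theorem eq_R₂₁_of_tmul {J R' : (A ⊗[R] A) ⊗[R] A →ₗ[R] (A ⊗[R] A) ⊗[R] A}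
    (hJ : ∀ x y c : A, J ((x ⊗ₜ y) ⊗ₜ c) = (y ⊗ₜ x) ⊗ₜ c)
    (hR : ∀ a b c : A, R' ((a ⊗ₜ b) ⊗ₜ c) = J (db (b ⊗ₜ a) ⊗ₜ c)) : R' = R₂₁ db := by
  obtain rfl : J = swap₁₂ R A := ext_threefold fun x y c => by simp [hJ, swap₁₂]
  exact ext_threefold fun a b c => by simp [hR, R₂₁, R₁₂, swap₁₂]

end Semiring

section Ring

variable {R A : Type*} [CommRing R] [Ring A] [Algebra R A] (db : A ⊗[R] A →ₗ[R] A ⊗[R] A)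

def D₁ : (A ⊗[R] A) ⊗[R] A →ₗ[R] (A ⊗[R] A) ⊗[R] A :=
  R₁₂ db ∘ₗ R₂₃ db - R₂₃ db ∘ₗ R₁₃ db - R₁₃ db ∘ₗ R₁₂ db

def D₂ : (A ⊗[R] A) ⊗[R] A →ₗ[R] (A ⊗[R] A) ⊗[R] A :=
  swap₁₂ R A ∘ₗ (R₁₃ db ∘ₗ R₂₃ db - R₂₁ db ∘ₗ R₁₃ db - R₂₃ db ∘ₗ R₁₂ db)

theorem D₁_add_D₂ : D₁ db + D₂ db =
    (R₁₂ db + swap₁₂ R A ∘ₗ R₁₃ db) ∘ₗ R₂₃ db - (R₂₃ db + swap₁₂ R A ∘ₗ R₂₁ db) ∘ₗ R₁₃ db -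
      (R₁₃ db + swap₁₂ R A ∘ₗ R₂₃ db) ∘ₗ R₁₂ db := by
  simp only [D₁, D₂, comp_sub, add_comp, comp_assoc]
  abel

variable {db}

theorem jacobiator_eq (hR : LeibnizRight db) (hL : LeibnizLeft db) (h₁ h₂ x : A) :
    bracket db h₁ (bracket db h₂ x) - bracket db h₂ (bracket db h₁ x) -
        bracket db (bracket db h₁ h₂) x = mul₃ R A ((D₁ db + D₂ db) ((h₁ ⊗ₜ h₂) ⊗ₜ x)) := by
  rw [bracket_bracket_eq_mul₃_R₂₃ hR, bracket_bracket_eq_mul₃_R₁₃ hR,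
    bracket_bracket_left_eq_mul₃_R₁₂ hL, D₁_add_D₂]
  simp only [LinearMap.sub_apply, LinearMap.add_apply, comp_apply, map_sub, map_add]

theorem jacobi_iff (hR : LeibnizRight db) (hL : LeibnizLeft db) :
    (∀ h₁ h₂ x : A, bracket db h₁ (bracket db h₂ x) - bracket db h₂ (bracket db h₁ x) =
        bracket db (bracket db h₁ h₂) x) ↔ mul₃ R A ∘ₗ (D₁ db + D₂ db) = 0 := by
  simp only [← sub_eq_zero (b := bracket db (bracket db _ _) _), jacobiator_eq hR hL]
  exact ⟨fun h => ext_threefold h, fun h h₁ h₂ x => congrArg (· ((h₁ ⊗ₜ h₂) ⊗ₜ x)) h⟩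

end Ring

end DoubleBracket

open DoubleBracket

/-- The Jacobi defect of the Loday bracket `{a,b} = μ(db(a⊗b))`
equals `μ₃ ∘ (D₁ + D₂)`, so the Jacobi identity holds iff `μ₃ ∘ (D₁ + D₂) = 0`. -/
theorem stmt19 {A : Type*} [Ring A] [Algebra ℂ A]
    (db : A ⊗[ℂ] A →ₗ[ℂ] A ⊗[ℂ] A)
    (hLeibR : ∀ a b c : A, db (a ⊗ₜ[ℂ] (b * c)) =
      (b ⊗ₜ[ℂ] (1 : A)) * db (a ⊗ₜ[ℂ] c) + db (a ⊗ₜ[ℂ] b) * ((1 : A) ⊗ₜ[ℂ] c))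
    (hLeibL : ∀ a b c : A, db ((a * b) ⊗ₜ[ℂ] c) =
      ((1 : A) ⊗ₜ[ℂ] a) * db (b ⊗ₜ[ℂ] c) + db (a ⊗ₜ[ℂ] c) * (b ⊗ₜ[ℂ] (1 : A)))
    (br : A → A → A)
    (hbr : ∀ a b : A, br a b = LinearMap.mul' ℂ A (db (a ⊗ₜ[ℂ] b)))
    (J23 J13 J21 : (A ⊗[ℂ] A) ⊗[ℂ] A →ₗ[ℂ] (A ⊗[ℂ] A) ⊗[ℂ] A)
    (hJ23 : ∀ x y a : A, J23 ((x ⊗ₜ[ℂ] y) ⊗ₜ[ℂ] a) = (a ⊗ₜ[ℂ] x) ⊗ₜ[ℂ] y)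
    (hJ13 : ∀ x y b : A, J13 ((x ⊗ₜ[ℂ] y) ⊗ₜ[ℂ] b) = (x ⊗ₜ[ℂ] b) ⊗ₜ[ℂ] y)
    (hJ21 : ∀ x y c : A, J21 ((x ⊗ₜ[ℂ] y) ⊗ₜ[ℂ] c) = (y ⊗ₜ[ℂ] x) ⊗ₜ[ℂ] c)
    (R12 R23 R13 R21 : (A ⊗[ℂ] A) ⊗[ℂ] A →ₗ[ℂ] (A ⊗[ℂ] A) ⊗[ℂ] A)
    (hR12 : ∀ a b c : A, R12 ((a ⊗ₜ[ℂ] b) ⊗ₜ[ℂ] c) = db (a ⊗ₜ[ℂ] b) ⊗ₜ[ℂ] c)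
    (hR23 : ∀ a b c : A, R23 ((a ⊗ₜ[ℂ] b) ⊗ₜ[ℂ] c) = J23 (db (b ⊗ₜ[ℂ] c) ⊗ₜ[ℂ] a))
    (hR13 : ∀ a b c : A, R13 ((a ⊗ₜ[ℂ] b) ⊗ₜ[ℂ] c) = J13 (db (a ⊗ₜ[ℂ] c) ⊗ₜ[ℂ] b))
    (hR21 : ∀ a b c : A, R21 ((a ⊗ₜ[ℂ] b) ⊗ₜ[ℂ] c) = J21 (db (b ⊗ₜ[ℂ] a) ⊗ₜ[ℂ] c))
    (s12 : (A ⊗[ℂ] A) ⊗[ℂ] A →ₗ[ℂ] (A ⊗[ℂ] A) ⊗[ℂ] A)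
    (hs12 : ∀ a b c : A, s12 ((a ⊗ₜ[ℂ] b) ⊗ₜ[ℂ] c) = (b ⊗ₜ[ℂ] a) ⊗ₜ[ℂ] c)
    (D1 D2 : (A ⊗[ℂ] A) ⊗[ℂ] A →ₗ[ℂ] (A ⊗[ℂ] A) ⊗[ℂ] A)
    (hD1 : D1 = R12 ∘ₗ R23 - R23 ∘ₗ R13 - R13 ∘ₗ R12)
    (hD2 : D2 = s12 ∘ₗ (R13 ∘ₗ R23 - R21 ∘ₗ R13 - R23 ∘ₗ R12))
    (μ3 : (A ⊗[ℂ] A) ⊗[ℂ] A →ₗ[ℂ] A)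
    (hμ3 : ∀ a b c : A, μ3 ((a ⊗ₜ[ℂ] b) ⊗ₜ[ℂ] c) = a * b * c) :
    (∀ H1 H2 x : A,
      br H1 (br H2 x) - br H2 (br H1 x) - br (br H1 H2) x =
        μ3 ((D1 + D2) ((H1 ⊗ₜ[ℂ] H2) ⊗ₜ[ℂ] x))) ∧
    ((∀ H1 H2 x : A,
        br H1 (br H2 x) - br H2 (br H1 x) = br (br H1 H2) x) ↔
      μ3 ∘ₗ (D1 + D2) = 0) := by
  obtain rfl : br = fun a b => bracket db a b := funext₂ hbr
  obtain rfl : μ3 = mul₃ ℂ A := ext_threefold fun a b c => by simp [hμ3]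
  obtain rfl : s12 = swap₁₂ ℂ A := ext_threefold fun a b c => by simp [hs12, swap₁₂]
  obtain rfl : R12 = R₁₂ db := ext_threefold fun a b c => by simp [hR12, R₁₂]
  obtain rfl := eq_R₂₃_of_tmul hJ23 hR23
  obtain rfl := eq_R₁₃_of_tmul hJ13 hR13
  obtain rfl := eq_R₂₁_of_tmul hJ21 hR21
  subst hD1 hD2
  exact ⟨jacobiator_eq hLeibR hLeibL, jacobi_iff hLeibR hLeibL⟩
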